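/- arXiv:1712.03132 — 3 statements merged into one kernel-verified Lean document; each statement's English description precedes it below -/
import Mathlib

section
/- Let f : ℝ → ℝ be continuous and nonvanishing on ℝ, let c ∈ ℝ, and define L : ℝ → ℝ by L(y) = ∫₀^y c / f(τ) dτ. Let x : ℝ → ℝ be differentiable with x'(t) = f(x(t)) for all t. Then for all t, exp(L(x(t))) = exp(L(x(0))) · exp(c·t). In particular the growth or decay of this Koopman observable is governed solely by the sign of the arbitrary constant c and is independent of the vector field f. -/
/-!
`L` is a primitive of `c / f`, so along any solution of `ẋ = f x` the chain rule gives
`(L ∘ x)' = (c / f(x)) · f(x) = c`. Hence `L (x t) = L (x 0) + c t`, and exponentiating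
turns this affine law into the exponential one.
-/

theorem eq_add_mul_of_forall_hasDerivAt {F : ℝ → ℝ} {c : ℝ} (hF : ∀ t, HasDerivAt F c t)
    (t : ℝ) : F t = F 0 + c * t := by
  have hG : ∀ s, HasDerivAt (fun s => F s - c * s) 0 s := fun s => by
    have h := (hF s).sub ((hasDerivAt_id' s).const_mul c)
    rwa [mul_one, sub_self] at h
  have hconst := is_const_of_deriv_eq_zero (fun s => (hG s).differentiableAt)
    (fun s => (hG s).deriv) t 0
  simp only [mul_zero, sub_zero] at hconst
  linarith

theorem hasDerivAt_comp_of_flow {f g L x : ℝ → ℝ} {c : ℝ}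
    (hL : ∀ y, HasDerivAt L (g y) y) (hgf : ∀ y, g y * f y = c)
    (hx : ∀ t, HasDerivAt x (f (x t)) t) (t : ℝ) : HasDerivAt (L ∘ x) c t := by
  simpa only [hgf] using (hL (x t)).comp t (hx t)

theorem hasDerivAt_of_eq_integral {g L : ℝ → ℝ} (hg : Continuous g)
    (hL : ∀ y, L y = ∫ τ in (0:ℝ)..y, g τ) (y : ℝ) : HasDerivAt L (g y) y := by
  rw [show L = fun y => ∫ τ in (0:ℝ)..y, g τ from funext hL]
  exact (hg.integral_hasStrictDerivAt 0 y).hasDerivAt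

/-- For a scalar system `ẋ = f x` with `f` continuous and nonvanishing,
the observable `exp(L(x(t)))`, where `L y = ∫₀^y c / f`, evolves exactly as
`exp(L(x(0))) · exp(c t)`: its growth/decay depends solely on the sign of `c`. -/
theorem koopman_exp_observable_solution (f : ℝ → ℝ) (hf : Continuous f)
    (hf0 : ∀ τ : ℝ, f τ ≠ 0) (c : ℝ) (L : ℝ → ℝ)
    (hL : ∀ y : ℝ, L y = ∫ τ in (0:ℝ)..y, c / f τ)
    (x : ℝ → ℝ) (hx : ∀ t : ℝ, HasDerivAt x (f (x t)) t) :
    ∀ t : ℝ, Real.exp (L (x t)) = Real.exp (L (x 0)) * Real.exp (c * t) := by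
  intro t
  have hLder := hasDerivAt_of_eq_integral (continuous_const.div hf hf0) hL
  have hflow := hasDerivAt_comp_of_flow hLder (fun y => div_mul_cancel₀ c (hf0 y)) hx
  rw [← Real.exp_add]
  exact congrArg Real.exp (eq_add_mul_of_forall_hasDerivAt hflow t)
end

section
/- Fix α ∈ ℝ, n ∈ ℕ, a center vector v ∈ ℝⁿ, and let f : ℝⁿ → ℝⁿ be continuous. Let x : ℝ → ℝⁿ be differentiable with x'(t) = f(x(t)) for all t. Then t ↦ Λ^α_v(x(t)) is differentiable and d/dt Λ^α_v(x(t)) = Σ_{i=1}^n α · (1 − λ_{α,v_i}(x_i(t))) · Λ^α_v(x(t)) · f_i(x(t)). -/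
/-! Each factor is a rescaled sigmoid, `λ_{α,μ}(y) = σ(α (y - μ))`, so `σ' = σ (1 - σ)` gives
`λ' = α λ (1 - λ)`. By the product rule and the chain rule, the `i`-th summand of the derivative
of `Λ^α_v ∘ x` is the product of the other factors times `α λᵢ (1 - λᵢ) xᵢ'`,
that is `α (1 - λᵢ) Λ^α_v xᵢ'`. -/

/-- The logistic function with steepness `α` and center `μ`. -/
noncomputable def logistic (α μ x : ℝ) : ℝ := 1 / (1 + Real.exp (-α * (x - μ)))

/-- The multivariate conjunctive logistic function with center vector `v`. -/
noncomputable def mvLogistic {n : ℕ} (α : ℝ) (v x : Fin n → ℝ) : ℝ :=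
  ∏ i, logistic α (v i) (x i)

lemma logistic_eq_sigmoid (α μ : ℝ) :
    logistic α μ = fun y => Real.sigmoid (α * (y - μ)) := by
  funext y
  rw [logistic, Real.sigmoid_def, one_div, neg_mul]

lemma hasDerivAt_logistic (α μ y : ℝ) :
    HasDerivAt (logistic α μ) (α * logistic α μ y * (1 - logistic α μ y)) y := by
  have hlin : HasDerivAt (fun z => α * (z - μ)) α y := by
    simpa using ((hasDerivAt_id y).sub_const μ).const_mul α
  have h : HasDerivAt (fun z => Real.sigmoid (α * (z - μ)))
      (Real.sigmoid (α * (y - μ)) * (1 - Real.sigmoid (α * (y - μ))) * α) y :=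
    (Real.hasDerivAt_sigmoid _).comp y hlin
  rw [logistic_eq_sigmoid]
  convert h using 1
  ring

lemma mvLogistic_eq_prod_erase_mul {n : ℕ} (α : ℝ) (v x : Fin n → ℝ) (i : Fin n) :
    mvLogistic α v x =
      (∏ j ∈ Finset.univ.erase i, logistic α (v j) (x j)) * logistic α (v i) (x i) :=
  (Finset.prod_erase_mul _ _ (Finset.mem_univ i)).symm

theorem HasDerivAt.mvLogistic {n : ℕ} {α : ℝ} {v : Fin n → ℝ} {x : ℝ → Fin n → ℝ}
    {x' : Fin n → ℝ} {t : ℝ} (hx : HasDerivAt x x' t) :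
    HasDerivAt (fun s => mvLogistic α v (x s))
      (∑ i, α * (1 - logistic α (v i) (x t i)) * mvLogistic α v (x t) * x' i) t := by
  have hfactor (i : Fin n) : HasDerivAt (fun s => logistic α (v i) (x s i))
      (α * logistic α (v i) (x t i) * (1 - logistic α (v i) (x t i)) * x' i) t :=
    (hasDerivAt_logistic α (v i) (x t i)).comp (h := fun s => x s i) t (hasDerivAt_pi.1 hx i)
  refine (HasDerivAt.fun_finsetProd (u := Finset.univ)
    (f := fun i s => logistic α (v i) (x s i)) fun i _ => hfactor i).congr_deriv ?_
  refine Finset.sum_congr rfl fun i _ => ?_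
  rw [mvLogistic_eq_prod_erase_mul α v (x t) i, smul_eq_mul]
  ring

theorem mvLogistic_deriv_along_flow_general {n : ℕ} (α : ℝ) (v : Fin n → ℝ)
    (f : (Fin n → ℝ) → (Fin n → ℝ))
    (x : ℝ → (Fin n → ℝ)) (hx : ∀ t : ℝ, HasDerivAt x (f (x t)) t) :
    ∀ t : ℝ, HasDerivAt (fun s => mvLogistic α v (x s))
      (∑ i, α * (1 - logistic α (v i) (x t i)) * mvLogistic α v (x t) * f (x t) i) t :=
  fun t => (hx t).mvLogistic

/-- Along a trajectory of `ẋ = f(x)`, the conjunctive logistic observable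
`Λ^α_v(x(t))` is differentiable with
`d/dt Λ^α_v(x(t)) = Σᵢ α (1 - λ_{α,vᵢ}(xᵢ(t))) Λ^α_v(x(t)) fᵢ(x(t))`. -/
theorem mvLogistic_deriv_along_flow {n : ℕ} (α : ℝ) (v : Fin n → ℝ)
    (f : (Fin n → ℝ) → (Fin n → ℝ)) (hf : Continuous f)
    (x : ℝ → (Fin n → ℝ)) (hx : ∀ t : ℝ, HasDerivAt x (f (x t)) t) :
    ∀ t : ℝ, HasDerivAt (fun s => mvLogistic α v (x s))
      (∑ i, α * (1 - logistic α (v i) (x t i)) * mvLogistic α v (x t) * f (x t) i) t :=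
  mvLogistic_deriv_along_flow_general α v f x hx
end

section
/- Let n ∈ ℕ and let μ^l, μ^k ∈ ℝⁿ satisfy μ^k_i ≤ μ^l_i for all i ∈ {1,…,n}. Let x ∈ ℝⁿ satisfy x_i ≠ μ^l_i and x_i ≠ μ^k_i for all i ∈ {1,…,n}. Then α · (Λ^α_{μ^l}(x) · Λ^α_{μ^k}(x) − Λ^α_{μ^l}(x)) → 0 as α → ∞; that is, the α-scaled error of approximating the product of the two conjunctive logistic functions by the conjunctive logistic function with the componentwise-larger center converges to zero as the steepness parameter tends to infinity. -/
/-! Write the error as `-α Λ_{μˡ}(x) (1 - Λ_{μᵏ}(x))`, both factors `Λ` lying in `[0, 1]`.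
If some `xᵢ < μˡᵢ`, the single factor `λ_{α,μˡᵢ}(xᵢ) ≤ exp (-α (μˡᵢ - xᵢ))` already gives
`α Λ_{μˡ}(x) → 0`. Otherwise `x > μˡ ≥ μᵏ` coordinatewise, and since
`1 - λ_{α,μ}(y) = λ_{α,y}(μ)`, the bound `1 - ∏ᵢ aᵢ ≤ ∑ᵢ (1 - aᵢ)` gives
`α (1 - Λ_{μᵏ}(x)) ≤ ∑ᵢ α λ_{α,xᵢ}(μᵏᵢ) → 0`. -/

open Filter Topology

theorem Finset.one_sub_prod_le_sum {ι R : Type*} [CommRing R] [LinearOrder R]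
    [IsStrictOrderedRing R] (s : Finset ι) {f : ι → R} (h0 : ∀ i ∈ s, 0 ≤ f i)
    (h1 : ∀ i ∈ s, f i ≤ 1) : 1 - ∏ i ∈ s, f i ≤ ∑ i ∈ s, (1 - f i) := by
  induction s using Finset.cons_induction with
  | empty => simp
  | cons a s ha ih =>
    simp only [Finset.forall_mem_cons] at h0 h1
    rw [Finset.prod_cons, Finset.sum_cons]
    have hP : ∏ i ∈ s, f i ≤ 1 := Finset.prod_le_one h0.2 h1.2
    calc 1 - f a * ∏ i ∈ s, f i = (1 - f a) + f a * (1 - ∏ i ∈ s, f i) := by ring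
      _ ≤ (1 - f a) + (1 - ∏ i ∈ s, f i) := by
        gcongr; exact mul_le_of_le_one_left (sub_nonneg.2 hP) h1.1
      _ ≤ (1 - f a) + ∑ i ∈ s, (1 - f i) := by gcongr; exact ih h0.2 h1.2

theorem tendsto_mul_exp_neg_mul_atTop {d : ℝ} (hd : 0 < d) :
    Tendsto (fun α : ℝ => α * Real.exp (-d * α)) atTop (𝓝 0) := by
  simpa using tendsto_rpow_mul_exp_neg_mul_atTop_nhds_zero 1 d hd

section Logistic

variable (α μ x : ℝ)

theorem logistic_pos : 0 < logistic α μ x := by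
  unfold logistic; positivity

theorem logistic_le_one : logistic α μ x ≤ 1 :=
  div_le_one_of_le₀ (le_add_of_nonneg_right (Real.exp_pos _).le) (by positivity)

theorem one_sub_logistic : 1 - logistic α μ x = logistic α x μ := by
  unfold logistic
  rw [show -α * (μ - x) = α * (x - μ) by ring, neg_mul, Real.exp_neg]
  have := Real.exp_pos (α * (x - μ))
  field_simp
  ring

theorem logistic_le_exp : logistic α μ x ≤ Real.exp (α * (x - μ)) :=
  calc logistic α μ x ≤ 1 / Real.exp (-α * (x - μ)) :=
        one_div_le_one_div_of_le (Real.exp_pos _) (le_add_of_nonneg_left zero_le_one)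
    _ = Real.exp (α * (x - μ)) := by rw [one_div, ← Real.exp_neg]; ring_nf

variable {μ x}

theorem tendsto_mul_logistic_atTop_of_lt (h : x < μ) :
    Tendsto (fun α => α * logistic α μ x) atTop (𝓝 0) := by
  refine squeeze_zero' ?_ ?_ (tendsto_mul_exp_neg_mul_atTop (sub_pos.2 h))
  · filter_upwards [eventually_ge_atTop 0] with α hα
    exact mul_nonneg hα (logistic_pos α μ x).le
  · filter_upwards [eventually_ge_atTop 0] with α hα
    calc α * logistic α μ x ≤ α * Real.exp (α * (x - μ)) := by
          gcongr; exact logistic_le_exp α μ x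
      _ = α * Real.exp (-(μ - x) * α) := by ring_nf

end Logistic

section MvLogistic

variable {n : ℕ} (α : ℝ) (v x : Fin n → ℝ)

theorem mvLogistic_nonneg : 0 ≤ mvLogistic α v x :=
  Finset.prod_nonneg fun i _ => (logistic_pos α (v i) (x i)).le

theorem mvLogistic_le_one : mvLogistic α v x ≤ 1 :=
  Finset.prod_le_one (fun i _ => (logistic_pos α (v i) (x i)).le)
    (fun i _ => logistic_le_one α (v i) (x i))

theorem mvLogistic_le_logistic (i : Fin n) : mvLogistic α v x ≤ logistic α (v i) (x i) := by
  unfold mvLogistic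
  rw [← Finset.mul_prod_erase Finset.univ _ (Finset.mem_univ i)]
  exact mul_le_of_le_one_right (logistic_pos α (v i) (x i)).le
    (Finset.prod_le_one (fun j _ => (logistic_pos α (v j) (x j)).le)
      (fun j _ => logistic_le_one α (v j) (x j)))

theorem one_sub_mvLogistic_le_sum : 1 - mvLogistic α v x ≤ ∑ i, logistic α (x i) (v i) :=
  calc 1 - mvLogistic α v x ≤ ∑ i, (1 - logistic α (v i) (x i)) :=
        Finset.univ.one_sub_prod_le_sum (fun i _ => (logistic_pos α (v i) (x i)).le)
          (fun i _ => logistic_le_one α (v i) (x i))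
    _ = ∑ i, logistic α (x i) (v i) := by simp only [one_sub_logistic]

variable {v x}

theorem tendsto_mul_mvLogistic_atTop_of_lt {i : Fin n} (h : x i < v i) :
    Tendsto (fun α => α * mvLogistic α v x) atTop (𝓝 0) := by
  refine squeeze_zero' ?_ ?_ (tendsto_mul_logistic_atTop_of_lt h)
  all_goals filter_upwards [eventually_ge_atTop 0] with α hα
  · exact mul_nonneg hα (mvLogistic_nonneg α v x)
  · exact mul_le_mul_of_nonneg_left (mvLogistic_le_logistic α v x i) hα

theorem tendsto_mul_one_sub_mvLogistic_atTop (h : ∀ i, v i < x i) :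
    Tendsto (fun α => α * (1 - mvLogistic α v x)) atTop (𝓝 0) := by
  have hsum : Tendsto (fun α => ∑ i, α * logistic α (x i) (v i)) atTop (𝓝 0) := by
    simpa using tendsto_finsetSum Finset.univ fun i _ => tendsto_mul_logistic_atTop_of_lt (h i)
  refine squeeze_zero' ?_ ?_ hsum
  all_goals filter_upwards [eventually_ge_atTop 0] with α hα
  · exact mul_nonneg hα (sub_nonneg.2 (mvLogistic_le_one α v x))
  · rw [← Finset.mul_sum]
    exact mul_le_mul_of_nonneg_left (one_sub_mvLogistic_le_sum α v x) hα

end MvLogistic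

theorem mvLogistic_scaled_error_tendsto_zero_general {n : ℕ} (μl μk : Fin n → ℝ)
    (hord : ∀ i, μk i ≤ μl i) (x : Fin n → ℝ)
    (hxl : ∀ i, x i ≠ μl i) :
    Tendsto (fun α : ℝ =>
        α * (mvLogistic α μl x * mvLogistic α μk x - mvLogistic α μl x))
      atTop (𝓝 0) := by
  have bounded (v : Fin n → ℝ) (c : ℝ) (hc : c ∈ Set.Icc (0 : ℝ) 1) :
      IsBoundedUnder (· ≤ ·) atTop (fun α => ‖mvLogistic α v x - c‖) :=
    isBoundedUnder_of ⟨1, fun α => abs_sub_le_iff.2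
      ⟨by linarith [mvLogistic_le_one α v x, hc.1], by linarith [mvLogistic_nonneg α v x, hc.2]⟩⟩
  by_cases hlow : ∃ i, x i < μl i
  · obtain ⟨i, hi⟩ := hlow
    have := (tendsto_mul_mvLogistic_atTop_of_lt hi).zero_mul_isBoundedUnder_le
      (bounded μk 1 (by simp))
    exact this.congr fun α => by ring
  · push Not at hlow
    have hk : ∀ i, μk i < x i := fun i => (hord i).trans_lt ((hlow i).lt_of_ne' (hxl i))
    have := (isBoundedUnder_le_mul_tendsto_zero (bounded μl 0 (by simp))
      (tendsto_mul_one_sub_mvLogistic_atTop hk)).neg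
    rw [neg_zero] at this
    exact this.congr fun α => by ring

/-- If `μᵏ ≤ μˡ` componentwise and `x` avoids all the centers'
coordinates, then the `α`-scaled error of approximating `Λ^α_{μˡ} Λ^α_{μᵏ}` by the
dictionary function with the larger center, `Λ^α_{μˡ}`, vanishes as `α → ∞`. -/
theorem mvLogistic_scaled_error_tendsto_zero {n : ℕ} (μl μk : Fin n → ℝ)
    (hord : ∀ i, μk i ≤ μl i) (x : Fin n → ℝ)
    (hxl : ∀ i, x i ≠ μl i) (hxk : ∀ i, x i ≠ μk i) :
    Tendsto (fun α : ℝ =>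
        α * (mvLogistic α μl x * mvLogistic α μk x - mvLogistic α μl x))
      atTop (𝓝 0) :=
  mvLogistic_scaled_error_tendsto_zero_general μl μk hord x hxl
end
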